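/- arXiv:1607.06326 — 3 statements merged into one kernel-verified Lean document; each statement's English description precedes it below -/
import Mathlib

section
/- For every integer n ≥ 2 and all smooth compactly supported functions u, φ : ℝⁿ → ℝ, the function s ↦ S(u+sφ) is differentiable at s = 0 and its derivative equals the anomaly A(φ,u) = ∫_{ℝⁿ} e^{nu}·( (n−2)·φ·R(u) + 2(n−1)·Δ_u φ ) dx. (This is the statement s S_EH(g) = A(φ,g): the infinitesimal Weyl variation of the Einstein–Hilbert action is the breaking term (anomaly).) -/
open MeasureTheory Real

set_option maxHeartbeats 1000000

noncomputable section

/-- Coordinate partial derivative `∂ᵢ f x` on `ℝⁿ = EuclideanSpace ℝ (Fin n)`. -/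
def pd (n : ℕ) (f : EuclideanSpace ℝ (Fin n) → ℝ) (i : Fin n)
    (x : EuclideanSpace ℝ (Fin n)) : ℝ :=
  fderiv ℝ f x (EuclideanSpace.single i 1)

/-- Second coordinate partial derivative `∂ᵢ∂ᵢ f x`. -/
def pd2 (n : ℕ) (f : EuclideanSpace ℝ (Fin n) → ℝ) (i : Fin n)
    (x : EuclideanSpace ℝ (Fin n)) : ℝ :=
  pd n (pd n f i) i x

/-- Scalar curvature expression of the conformally flat metric `g_v = e^{2v} δ`:
`R(v) = e^{−2v} ( −2(n−1) Σᵢ ∂ᵢ∂ᵢ v − (n−1)(n−2) Σᵢ (∂ᵢ v)² )`. -/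
def Rscal (n : ℕ) (v : EuclideanSpace ℝ (Fin n) → ℝ)
    (x : EuclideanSpace ℝ (Fin n)) : ℝ :=
  Real.exp (-2 * v x) *
    (-2 * ((n : ℝ) - 1) * ∑ i, pd2 n v i x
      - ((n : ℝ) - 1) * ((n : ℝ) - 2) * ∑ i, (pd n v i x) ^ 2)

/-- Laplacian of `g_v` acting on `f`:
`Δ_v f = −e^{−2v} ( Σᵢ ∂ᵢ∂ᵢ f + (n−2) Σᵢ ∂ᵢ v ∂ᵢ f )`. -/
def lap (n : ℕ) (v f : EuclideanSpace ℝ (Fin n) → ℝ)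
    (x : EuclideanSpace ℝ (Fin n)) : ℝ :=
  -Real.exp (-2 * v x) *
    (∑ i, pd2 n f i x + ((n : ℝ) - 2) * ∑ i, pd n v i x * pd n f i x)

/-- Gradient square `|∇f|²_v = e^{−2v} Σᵢ (∂ᵢ f)²`. -/
def gradSq (n : ℕ) (v f : EuclideanSpace ℝ (Fin n) → ℝ)
    (x : EuclideanSpace ℝ (Fin n)) : ℝ :=
  Real.exp (-2 * v x) * ∑ i, (pd n f i x) ^ 2

/-- Einstein–Hilbert action `S(u) = ∫ e^{nu} R(u) dx`. -/
def SEH (n : ℕ) (u : EuclideanSpace ℝ (Fin n) → ℝ) : ℝ :=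
  ∫ x, Real.exp ((n : ℝ) * u x) * Rscal n u x

/-- Anomaly functional
`A(φ,u) = ∫ e^{nu} ( (n−2) φ R(u) + 2(n−1) Δ_u φ ) dx`. -/
def anomaly (n : ℕ) (φ u : EuclideanSpace ℝ (Fin n) → ℝ) : ℝ :=
  ∫ x, Real.exp ((n : ℝ) * u x) *
    (((n : ℝ) - 2) * φ x * Rscal n u x + 2 * ((n : ℝ) - 1) * lap n u φ x)

/-- Wess–Zumino functional `Γ_WZ(τ,u) = ∫₀¹ A(−2τ, u − tτ) dt`. -/
def WZ (n : ℕ) (τ u : EuclideanSpace ℝ (Fin n) → ℝ) : ℝ :=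
  ∫ t in (0 : ℝ)..1,
    anomaly n (fun y => -2 * τ y) (fun y => u y - t * τ y)

section aux
variable {n : ℕ}

lemma contDiff_pd {f : EuclideanSpace ℝ (Fin n) → ℝ} (hf : ContDiff ℝ (⊤ : ℕ∞) f) (i : Fin n) :
    ContDiff ℝ (⊤ : ℕ∞) (pd n f i) := by
  have h1 : ContDiff ℝ (⊤ : ℕ∞) (fderiv ℝ f) := (contDiff_infty_iff_fderiv.mp hf).2
  exact (ContinuousLinearMap.apply ℝ ℝ (EuclideanSpace.single i 1)).contDiff.comp h1

lemma contDiff_pd2 {f : EuclideanSpace ℝ (Fin n) → ℝ} (hf : ContDiff ℝ (⊤ : ℕ∞) f) (i : Fin n) :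
    ContDiff ℝ (⊤ : ℕ∞) (pd2 n f i) :=
  contDiff_pd (contDiff_pd hf i) i

lemma pd_eq_zero {f : EuclideanSpace ℝ (Fin n) → ℝ} {x : EuclideanSpace ℝ (Fin n)}
    (hx : x ∉ tsupport f) (i : Fin n) : pd n f i x = 0 := by
  have := (HasFDerivAt.of_notMem_tsupport ℝ hx).fderiv
  simp [pd, this]

lemma tsupport_pd_subset (f : EuclideanSpace ℝ (Fin n) → ℝ) (i : Fin n) :
    tsupport (pd n f i) ⊆ tsupport f := by
  apply closure_minimal _ (isClosed_tsupport f)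
  intro x hx
  by_contra h
  exact hx (pd_eq_zero h i)

lemma pd2_eq_zero {f : EuclideanSpace ℝ (Fin n) → ℝ} {x : EuclideanSpace ℝ (Fin n)}
    (hx : x ∉ tsupport f) (i : Fin n) : pd2 n f i x = 0 :=
  pd_eq_zero (fun h => hx (tsupport_pd_subset f i h)) i

lemma pd_add_smul {u φ : EuclideanSpace ℝ (Fin n) → ℝ}
    (hu : ContDiff ℝ (⊤ : ℕ∞) u) (hφ : ContDiff ℝ (⊤ : ℕ∞) φ) (s : ℝ) (i : Fin n) :
    pd n (fun y => u y + s * φ y) i = fun x => pd n u i x + s * pd n φ i x := by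
  funext x
  have hu' := (hu.differentiable (by simp)).differentiableAt (x := x)
  have hφ' := (hφ.differentiable (by simp)).differentiableAt (x := x)
  have h : HasFDerivAt (fun y => u y + s * φ y) (fderiv ℝ u x + s • fderiv ℝ φ x) x :=
    hu'.hasFDerivAt.add (hφ'.hasFDerivAt.const_smul s)
  simp [pd, h.fderiv]

lemma pd2_add_smul {u φ : EuclideanSpace ℝ (Fin n) → ℝ}
    (hu : ContDiff ℝ (⊤ : ℕ∞) u) (hφ : ContDiff ℝ (⊤ : ℕ∞) φ) (s : ℝ) (i : Fin n) :
    pd2 n (fun y => u y + s * φ y) i = fun x => pd2 n u i x + s * pd2 n φ i x := by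
  show pd n (pd n (fun y => u y + s * φ y) i) i = _
  rw [pd_add_smul hu hφ s i]
  exact pd_add_smul (contDiff_pd hu i) (contDiff_pd hφ i) s i

end aux

/-- The integrand of `SEH` along the conformal path, in polynomial form. -/
def Gfun (n : ℕ) (u φ : EuclideanSpace ℝ (Fin n) → ℝ) (s : ℝ)
    (x : EuclideanSpace ℝ (Fin n)) : ℝ :=
  Real.exp (((n : ℝ) - 2) * (u x + s * φ x)) *
    (-2 * ((n : ℝ) - 1) * ((∑ i, pd2 n u i x) + s * ∑ i, pd2 n φ i x)
      - ((n : ℝ) - 1) * ((n : ℝ) - 2) *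
        ((∑ i, (pd n u i x) ^ 2) + s * (2 * ∑ i, pd n u i x * pd n φ i x)
          + s ^ 2 * ∑ i, (pd n φ i x) ^ 2))

/-- The `s`-derivative of `Gfun`. -/
def Gder (n : ℕ) (u φ : EuclideanSpace ℝ (Fin n) → ℝ) (s : ℝ)
    (x : EuclideanSpace ℝ (Fin n)) : ℝ :=
  Real.exp (((n : ℝ) - 2) * (u x + s * φ x)) *
    (((n : ℝ) - 2) * φ x *
      (-2 * ((n : ℝ) - 1) * ((∑ i, pd2 n u i x) + s * ∑ i, pd2 n φ i x)
        - ((n : ℝ) - 1) * ((n : ℝ) - 2) *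
          ((∑ i, (pd n u i x) ^ 2) + s * (2 * ∑ i, pd n u i x * pd n φ i x)
            + s ^ 2 * ∑ i, (pd n φ i x) ^ 2))
      + (-2 * ((n : ℝ) - 1) * ∑ i, pd2 n φ i x
        - ((n : ℝ) - 1) * ((n : ℝ) - 2) *
          (2 * ∑ i, pd n u i x * pd n φ i x + 2 * s * ∑ i, (pd n φ i x) ^ 2)))

lemma hasDerivAt_aux (ν A B C D E ux φx : ℝ) (s : ℝ) :
    HasDerivAt (fun s : ℝ => Real.exp ((ν - 2) * (ux + s * φx)) *
      (-2 * (ν - 1) * (A + s * B) - (ν - 1) * (ν - 2) * (C + s * (2 * D) + s ^ 2 * E)))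
      (Real.exp ((ν - 2) * (ux + s * φx)) *
        ((ν - 2) * φx * (-2 * (ν - 1) * (A + s * B)
            - (ν - 1) * (ν - 2) * (C + s * (2 * D) + s ^ 2 * E))
          + (-2 * (ν - 1) * B - (ν - 1) * (ν - 2) * (2 * D + 2 * s * E)))) s := by
  have hlin : HasDerivAt (fun s : ℝ => ux + s * φx) φx s := by
    simpa using ((hasDerivAt_id s).mul_const φx).const_add ux
  have hexp : HasDerivAt (fun s : ℝ => Real.exp ((ν - 2) * (ux + s * φx)))
      (Real.exp ((ν - 2) * (ux + s * φx)) * ((ν - 2) * φx)) s :=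
    (hlin.const_mul (ν - 2)).exp
  have h1 : HasDerivAt (fun s : ℝ => A + s * B) B s := by
    simpa using ((hasDerivAt_id s).mul_const B).const_add A
  have hsq : HasDerivAt (fun s : ℝ => s ^ 2 * E) (2 * s * E) s := by
    simpa using (hasDerivAt_pow 2 s).mul_const E
  have h2 : HasDerivAt (fun s : ℝ => C + s * (2 * D) + s ^ 2 * E) (2 * D + 2 * s * E) s := by
    exact ((((hasDerivAt_id s).mul_const (2 * D)).const_add C).add hsq).congr_deriv (by ring)
  have hQ := (h1.const_mul (-2 * (ν - 1))).sub (h2.const_mul ((ν - 1) * (ν - 2)))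
  have h := hexp.mul hQ
  exact h.congr_deriv (by simp only [Pi.sub_apply]; ring)

section main
variable {n : ℕ} {u φ : EuclideanSpace ℝ (Fin n) → ℝ}

lemma hasDerivAt_Gfun (x : EuclideanSpace ℝ (Fin n)) (s : ℝ) :
    HasDerivAt (fun s : ℝ => Gfun n u φ s x) (Gder n u φ s x) s := by
  simp only [Gfun, Gder]
  exact hasDerivAt_aux _ _ _ _ _ _ _ _ s

lemma Gfun_eq (hu : ContDiff ℝ (⊤ : ℕ∞) u) (hφ : ContDiff ℝ (⊤ : ℕ∞) φ)
    (s : ℝ) (x : EuclideanSpace ℝ (Fin n)) :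
    Real.exp ((n : ℝ) * (u x + s * φ x)) * Rscal n (fun y => u y + s * φ y) x
      = Gfun n u φ s x := by
  have hA : ∑ i, pd2 n (fun y => u y + s * φ y) i x
      = (∑ i, pd2 n u i x) + s * ∑ i, pd2 n φ i x := by
    rw [Finset.mul_sum, ← Finset.sum_add_distrib]
    exact Finset.sum_congr rfl fun i _ => congrFun (pd2_add_smul hu hφ s i) x
  have hC : ∑ i, (pd n (fun y => u y + s * φ y) i x) ^ 2
      = (∑ i, (pd n u i x) ^ 2) + s * (2 * ∑ i, pd n u i x * pd n φ i x)
        + s ^ 2 * ∑ i, (pd n φ i x) ^ 2 := by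
    have e : ∀ i ∈ Finset.univ, (pd n (fun y => u y + s * φ y) i x) ^ 2
        = (pd n u i x) ^ 2 + s * (2 * (pd n u i x * pd n φ i x))
          + s ^ 2 * (pd n φ i x) ^ 2 := fun i _ => by
      rw [congrFun (pd_add_smul hu hφ s i) x]; ring
    rw [Finset.sum_congr rfl e]
    simp [Finset.sum_add_distrib, Finset.mul_sum]
  simp only [Rscal, Gfun, hA, hC]
  rw [show ((n : ℝ) - 2) * (u x + s * φ x)
      = (n : ℝ) * (u x + s * φ x) + -2 * (u x + s * φ x) by ring, Real.exp_add]
  ring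

lemma Gder_zero_eq (x : EuclideanSpace ℝ (Fin n)) :
    Real.exp ((n : ℝ) * u x) *
      (((n : ℝ) - 2) * φ x * Rscal n u x + 2 * ((n : ℝ) - 1) * lap n u φ x)
      = Gder n u φ 0 x := by
  simp only [Rscal, lap, Gder]
  rw [show ((n : ℝ) - 2) * (u x + 0 * φ x) = (n : ℝ) * u x + -2 * u x by ring, Real.exp_add]
  ring

end main

/-- The infinitesimal Weyl variation of the Einstein–Hilbert action is the
anomaly: `s S_EH(g) = A(φ,g)`. -/
theorem weyl_variation_of_EH_action_is_anomaly
    (n : ℕ) (hn : 2 ≤ n)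
    (u φ : EuclideanSpace ℝ (Fin n) → ℝ)
    (hu : ContDiff ℝ (⊤ : ℕ∞) u) (hφ : ContDiff ℝ (⊤ : ℕ∞) φ)
    (hcu : HasCompactSupport u) (hcφ : HasCompactSupport φ) :
    HasDerivAt (fun s : ℝ => SEH n (fun y => u y + s * φ y))
      (anomaly n φ u) 0 := by
  have hu' : ContDiff ℝ (⊤ : ℕ∞) u := hu.of_le (by simp)
  have hφ' : ContDiff ℝ (⊤ : ℕ∞) φ := hφ.of_le (by simp)
  set K := tsupport u ∪ tsupport φ with hKdef
  have hK : IsCompact K := hcu.union hcφ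
  have hxu : ∀ x ∉ K, x ∉ tsupport u := fun x hx h => hx (Or.inl h)
  have hxφ : ∀ x ∉ K, x ∉ tsupport φ := fun x hx h => hx (Or.inr h)
  -- vanishing of Gder off K
  have hGder0 : ∀ s : ℝ, ∀ x ∉ K, Gder n u φ s x = 0 := by
    intro s x hx
    simp [Gder, pd_eq_zero (hxφ x hx), pd2_eq_zero (hxφ x hx),
      image_eq_zero_of_notMem_tsupport (hxφ x hx)]
  have hGfun0 : ∀ x ∉ K, Gfun n u φ 0 x = 0 := by
    intro x hx
    simp [Gfun, pd_eq_zero (hxu x hx), pd2_eq_zero (hxu x hx)]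
  -- continuity
  have hcA : Continuous fun x : EuclideanSpace ℝ (Fin n) => ∑ i, pd2 n u i x :=
    continuous_finset_sum _ fun i _ => (contDiff_pd2 hu' i).continuous
  have hcB : Continuous fun x : EuclideanSpace ℝ (Fin n) => ∑ i, pd2 n φ i x :=
    continuous_finset_sum _ fun i _ => (contDiff_pd2 hφ' i).continuous
  have hcC : Continuous fun x : EuclideanSpace ℝ (Fin n) => ∑ i, (pd n u i x) ^ 2 :=
    continuous_finset_sum _ fun i _ => (contDiff_pd hu' i).continuous.pow 2
  have hcD : Continuous fun x : EuclideanSpace ℝ (Fin n) => ∑ i, pd n u i x * pd n φ i x :=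
    continuous_finset_sum _ fun i _ =>
      ((contDiff_pd hu' i).continuous.mul (contDiff_pd hφ' i).continuous)
  have hcE : Continuous fun x : EuclideanSpace ℝ (Fin n) => ∑ i, (pd n φ i x) ^ 2 :=
    continuous_finset_sum _ fun i _ => (contDiff_pd hφ' i).continuous.pow 2
  have hGc : Continuous fun p : ℝ × EuclideanSpace ℝ (Fin n) => Gfun n u φ p.1 p.2 := by
    simp only [Gfun]
    exact (Real.continuous_exp.comp (continuous_const.mul
        ((hu'.continuous.comp continuous_snd).add
          (continuous_fst.mul (hφ'.continuous.comp continuous_snd))))).mul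
      (((continuous_const.mul ((hcA.comp continuous_snd).add
          (continuous_fst.mul (hcB.comp continuous_snd)))).sub
        (continuous_const.mul (((hcC.comp continuous_snd).add
            (continuous_fst.mul (continuous_const.mul (hcD.comp continuous_snd)))).add
          ((continuous_fst.pow 2).mul (hcE.comp continuous_snd))))))
  have hG'c : Continuous fun p : ℝ × EuclideanSpace ℝ (Fin n) => Gder n u φ p.1 p.2 := by
    simp only [Gder]
    exact (Real.continuous_exp.comp (continuous_const.mul
        ((hu'.continuous.comp continuous_snd).add
          (continuous_fst.mul (hφ'.continuous.comp continuous_snd))))).mul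
      (((continuous_const.mul (hφ'.continuous.comp continuous_snd)).mul
          ((continuous_const.mul ((hcA.comp continuous_snd).add
              (continuous_fst.mul (hcB.comp continuous_snd)))).sub
            (continuous_const.mul (((hcC.comp continuous_snd).add
                (continuous_fst.mul (continuous_const.mul (hcD.comp continuous_snd)))).add
              ((continuous_fst.pow 2).mul (hcE.comp continuous_snd)))))).add
        ((continuous_const.mul (hcB.comp continuous_snd)).sub
          (continuous_const.mul ((continuous_const.mul (hcD.comp continuous_snd)).add
            ((continuous_const.mul continuous_fst).mul (hcE.comp continuous_snd))))))
  -- bound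
  obtain ⟨Cb, hCb⟩ := IsCompact.exists_bound_of_continuousOn
    ((isCompact_Icc (a := (-1 : ℝ)) (b := 1)).prod hK) hG'c.continuousOn
  have h_bound : ∀ᵐ x : EuclideanSpace ℝ (Fin n), ∀ s ∈ Metric.ball (0 : ℝ) 1,
      ‖Gder n u φ s x‖ ≤ K.indicator (fun _ => Cb) x := by
    refine Filter.Eventually.of_forall fun x => fun s hs => ?_
    by_cases hx : x ∈ K
    · have hsmem : s ∈ Set.Icc (-1 : ℝ) 1 := by
        rw [Metric.mem_ball, Real.dist_0_eq_abs] at hs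
        exact ⟨(abs_lt.mp hs).1.le, (abs_lt.mp hs).2.le⟩
      have := hCb (s, x) ⟨hsmem, hx⟩
      rwa [Set.indicator_of_mem hx]
    · rw [hGder0 s x hx, Set.indicator_of_notMem hx]
      simp
  have bound_int : Integrable (K.indicator (fun _ => Cb)) := by
    rw [integrable_indicator_iff hK.measurableSet]
    exact integrableOn_const hK.measure_lt_top.ne
  have hGcs : ∀ s : ℝ, Continuous fun x => Gfun n u φ s x := fun s => by
    simp only [Gfun]
    exact (Real.continuous_exp.comp (continuous_const.mul
        (hu'.continuous.add (continuous_const.mul hφ'.continuous)))).mul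
      ((continuous_const.mul (hcA.add (continuous_const.mul hcB))).sub
        (continuous_const.mul ((hcC.add (continuous_const.mul
          (continuous_const.mul hcD))).add (continuous_const.mul hcE))))
  have hG'c0 : Continuous fun x => Gder n u φ 0 x := by
    simp only [Gder]
    exact (Real.continuous_exp.comp (continuous_const.mul
        (hu'.continuous.add (continuous_const.mul hφ'.continuous)))).mul
      (Continuous.add
        ((continuous_const.mul hφ'.continuous).mul
          ((continuous_const.mul (hcA.add (continuous_const.mul hcB))).sub
            (continuous_const.mul ((hcC.add (continuous_const.mul
              (continuous_const.mul hcD))).add (continuous_const.mul hcE)))))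
        ((continuous_const.mul hcB).sub
          (continuous_const.mul ((continuous_const.mul hcD).add
            (continuous_const.mul hcE)))))
  have hF_meas : ∀ᶠ s in nhds (0 : ℝ), AEStronglyMeasurable (Gfun n u φ s)
      (volume : Measure (EuclideanSpace ℝ (Fin n))) :=
    Filter.Eventually.of_forall fun s => (hGcs s).aestronglyMeasurable
  have hF_int : Integrable (Gfun n u φ 0) :=
    Continuous.integrable_of_hasCompactSupport (hGcs 0)
      (HasCompactSupport.intro hK hGfun0)
  have hF'_meas : AEStronglyMeasurable (Gder n u φ 0)
      (volume : Measure (EuclideanSpace ℝ (Fin n))) :=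
    hG'c0.aestronglyMeasurable
  have h_diff : ∀ᵐ x : EuclideanSpace ℝ (Fin n), ∀ s ∈ Metric.ball (0 : ℝ) 1,
      HasDerivAt (fun s => Gfun n u φ s x) (Gder n u φ s x) s :=
    Filter.Eventually.of_forall fun x s _ => hasDerivAt_Gfun x s
  have key := hasDerivAt_integral_of_dominated_loc_of_deriv_le (Metric.ball_mem_nhds 0 one_pos) hF_meas hF_int hF'_meas
    h_bound bound_int h_diff
  have h1 : (fun s : ℝ => SEH n (fun y => u y + s * φ y))
      = fun s => ∫ x, Gfun n u φ s x := by
    funext s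
    rw [SEH]
    congr 1
    funext x
    exact Gfun_eq hu' hφ' s x
  have h2 : anomaly n φ u = ∫ x, Gder n u φ 0 x := by
    rw [anomaly]
    congr 1
    funext x
    exact Gder_zero_eq x
  rw [h1, h2]
  exact key.2
end
end

section
/- (Stora's Lemma, vector-space formulation.) Let E be a real Banach space and ω : E → (E →L[ℝ] ℝ) a continuously differentiable map which is closed, i.e. its derivative is symmetric: for all x, v, w in E, (Dω(x) v)(w) = (Dω(x) w)(v). Let H : ℝ × ℝ → E be twice continuously differentiable, and set F(s) := ∫₀¹ ω(H(s,t))( ∂H/∂t (s,t) ) dt. Then F is differentiable and, for every s, F′(s) = ω(H(s,1))( ∂H/∂s (s,1) ) − ω(H(s,0))( ∂H/∂s (s,0) ); i.e. an infinitesimal deformation of the interpolating family changes the integral only through the variation at the ends of the path. -/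
open MeasureTheory Set Filter
open scoped Interval

/-!
Write `g = ω(H)(∂ₜH)` and `φ = ω(H)(∂ₛH)`; both are functions of `(s, t)`. Differentiating,
`∂ₛg - ∂ₜφ = Dω(H)(∂ₛH)(∂ₜH) - Dω(H)(∂ₜH)(∂ₛH) + ω(H)(∂ₛ∂ₜH - ∂ₜ∂ₛH)`, which vanishes because `ω`
is closed and the second derivative of `H` is symmetric (`d(H^*ω) = H^*dω = 0`). Differentiating
under the integral sign and applying the fundamental theorem of calculus in `t` then gives
`F'(s) = ∫₀¹ ∂ₛg = ∫₀¹ ∂ₜφ = φ(s, 1) - φ(s, 0)`.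
-/

section Pullback

variable {𝕜 : Type*} [NontriviallyNormedField 𝕜]
  {F : Type*} [NormedAddCommGroup F] [NormedSpace 𝕜 F]
  {E : Type*} [NormedAddCommGroup E] [NormedSpace 𝕜 E]
  {G : Type*} [NormedAddCommGroup G] [NormedSpace 𝕜 G]

/-- `(H^*ω)_p(v)`: the pullback of the form `ω` along `H`, evaluated on the constant field `v`. -/
noncomputable def pullbackApply (ω : E → E →L[𝕜] G) (H : F → E) (v p : F) : G :=
  ω (H p) (fderiv 𝕜 H p v)

variable {ω : E → E →L[𝕜] G} {H : F → E}

theorem contDiff_pullbackApply {n : WithTop ℕ∞} (hω : ContDiff 𝕜 n ω)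
    (hH : ContDiff 𝕜 (n + 1) H) (v : F) : ContDiff 𝕜 n (pullbackApply ω H v) :=
  (hω.comp (hH.of_le le_self_add)).clm_apply ((hH.fderiv_right le_rfl).clm_apply contDiff_const)

theorem fderiv_pullbackApply_apply {p : F} (hω : DifferentiableAt 𝕜 ω (H p))
    (hH : DifferentiableAt 𝕜 H p) (hDH : DifferentiableAt 𝕜 (fderiv 𝕜 H) p) (v w : F) :
    fderiv 𝕜 (pullbackApply ω H v) p w =
      fderiv 𝕜 ω (H p) (fderiv 𝕜 H p w) (fderiv 𝕜 H p v)
        + ω (H p) (fderiv 𝕜 (fderiv 𝕜 H) p w v) := by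
  have hωH : HasFDerivAt (fun q => ω (H q)) ((fderiv 𝕜 ω (H p)).comp (fderiv 𝕜 H p)) p :=
    hω.hasFDerivAt.comp p hH.hasFDerivAt
  have hDHv : HasFDerivAt (fun q => fderiv 𝕜 H q v) ((fderiv 𝕜 (fderiv 𝕜 H) p).flip v) p := by
    simpa using hDH.hasFDerivAt.clm_apply (hasFDerivAt_const v p)
  unfold pullbackApply
  rw [(hωH.clm_apply hDHv).fderiv]
  simp [add_comm]

theorem fderiv_pullbackApply_comm {p : F} (hω : DifferentiableAt 𝕜 ω (H p))
    (hclosed : ∀ v w, fderiv 𝕜 ω (H p) v w = fderiv 𝕜 ω (H p) w v)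
    (hH : DifferentiableAt 𝕜 H p) (hDH : DifferentiableAt 𝕜 (fderiv 𝕜 H) p)
    (hsymm : IsSymmSndFDerivAt 𝕜 H p) (v w : F) :
    fderiv 𝕜 (pullbackApply ω H v) p w = fderiv 𝕜 (pullbackApply ω H w) p v := by
  rw [fderiv_pullbackApply_apply hω hH hDH, fderiv_pullbackApply_apply hω hH hDH, hclosed,
    hsymm]

end Pullback

section Partial

variable {𝕜 : Type*} [NontriviallyNormedField 𝕜] {G : Type*} [NormedAddCommGroup G]
  [NormedSpace 𝕜 G] {g : 𝕜 × 𝕜 → G} {g' : 𝕜 × 𝕜 →L[𝕜] G} {s t : 𝕜}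

theorem HasFDerivAt.hasDerivAt_partial_fst (h : HasFDerivAt g g' (s, t)) :
    HasDerivAt (fun σ => g (σ, t)) (g' (1, 0)) s :=
  h.comp_hasDerivAt s ((hasDerivAt_id s).prodMk (hasDerivAt_const s t))

theorem HasFDerivAt.hasDerivAt_partial_snd (h : HasFDerivAt g g' (s, t)) :
    HasDerivAt (fun τ => g (s, τ)) (g' (0, 1)) t :=
  h.comp_hasDerivAt t ((hasDerivAt_const t s).prodMk (hasDerivAt_id t))

end Partial

theorem hasDerivAt_intervalIntegral_of_continuous_partial {G : Type*} [NormedAddCommGroup G]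
    [NormedSpace ℝ G] {f f' : ℝ × ℝ → G} (hf : Continuous f) (hf' : Continuous f')
    (hderiv : ∀ s t, HasDerivAt (fun σ => f (σ, t)) (f' (s, t)) s) (a b s : ℝ) :
    HasDerivAt (fun σ => ∫ t in a..b, f (σ, t)) (∫ t in a..b, f' (s, t)) s := by
  have hslice : ∀ {k : ℝ × ℝ → G}, Continuous k → ∀ σ, Continuous fun t => k (σ, t) :=
    fun hk σ => hk.comp (continuous_const.prodMk continuous_id)
  obtain ⟨C, hC⟩ : ∃ C, ∀ p ∈ Metric.closedBall s 1 ×ˢ [[a, b]], ‖f' p‖ ≤ C :=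
    (isCompact_closedBall s 1 |>.prod isCompact_uIcc).exists_bound_of_continuousOn
      hf'.continuousOn
  refine (intervalIntegral.hasDerivAt_integral_of_dominated_loc_of_deriv_le
    (bound := fun _ => C) (Metric.ball_mem_nhds s one_pos)
    (Eventually.of_forall fun σ => (hslice hf σ).aestronglyMeasurable)
    ((hslice hf s).intervalIntegrable a b) (hslice hf' s).aestronglyMeasurable
    (ae_of_all _ fun t ht σ hσ => hC (σ, t) ⟨Metric.ball_subset_closedBall hσ, uIoc_subset_uIcc ht⟩)
    intervalIntegrable_const (ae_of_all _ fun t _ σ _ => hderiv σ t)).2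

theorem stora_lemma_general
    (E : Type*) [NormedAddCommGroup E] [NormedSpace ℝ E]
    (ω : E → (E →L[ℝ] ℝ)) (hω : ContDiff ℝ 1 ω)
    (hclosed : ∀ x v w : E, (fderiv ℝ ω x v) w = (fderiv ℝ ω x w) v)
    (H : ℝ × ℝ → E) (hH : ContDiff ℝ 2 H) (s : ℝ) :
    HasDerivAt
      (fun s' : ℝ =>
        ∫ t in (0:ℝ)..1, ω (H (s', t)) (fderiv ℝ H (s', t) (0, 1)))
      (ω (H (s, 1)) (fderiv ℝ H (s, 1) (1, 0))
        - ω (H (s, 0)) (fderiv ℝ H (s, 0) (1, 0))) s := by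
  set g := pullbackApply ω H (0, 1)
  set φ := pullbackApply ω H (1, 0)
  have hg : ContDiff ℝ 1 g := contDiff_pullbackApply hω hH _
  have hφ : ContDiff ℝ 1 φ := contDiff_pullbackApply hω hH _
  have hcomm : ∀ p, fderiv ℝ g p (1, 0) = fderiv ℝ φ p (0, 1) := fun p =>
    fderiv_pullbackApply_comm (hω.differentiable one_ne_zero _) (hclosed (H p))
      (hH.differentiable two_ne_zero p) ((hH.fderiv_right le_rfl).differentiable one_ne_zero p)
      (hH.contDiffAt.isSymmSndFDerivAt (by simp)) _ _
  have hleibniz := hasDerivAt_intervalIntegral_of_continuous_partial hg.continuous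
    ((hg.continuous_fderiv one_ne_zero).clm_apply continuous_const)
    (fun s t => (hg.differentiable one_ne_zero (s, t)).hasFDerivAt.hasDerivAt_partial_fst) 0 1 s
  have hftc : ∫ t in (0 : ℝ)..1, fderiv ℝ φ (s, t) (0, 1) = φ (s, 1) - φ (s, 0) :=
    intervalIntegral.integral_eq_sub_of_hasDerivAt
      (fun t _ => (hφ.differentiable one_ne_zero (s, t)).hasFDerivAt.hasDerivAt_partial_snd)
      ((((hφ.continuous_fderiv one_ne_zero).clm_apply continuous_const).comp'
        (continuous_const.prodMk continuous_id)).intervalIntegrable 0 1)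
  simp_rw [hcomm, hftc] at hleibniz
  exact hleibniz

/-- **Stora's Lemma** (vector-space formulation).  For a `C¹` closed 1-form
`ω` on a real Banach space `E` and a `C²` two-parameter family of paths
`H : ℝ × ℝ → E`, the deformation of `F(s) = ∫₀¹ ω(H(s,t))(∂ₜH(s,t)) dt`
depends only on the variation at the ends of the path. -/
theorem stora_lemma
    (E : Type*) [NormedAddCommGroup E] [NormedSpace ℝ E] [CompleteSpace E]
    (ω : E → (E →L[ℝ] ℝ)) (hω : ContDiff ℝ 1 ω)
    (hclosed : ∀ x v w : E, (fderiv ℝ ω x v) w = (fderiv ℝ ω x w) v)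
    (H : ℝ × ℝ → E) (hH : ContDiff ℝ 2 H) (s : ℝ) :
    HasDerivAt
      (fun s' : ℝ =>
        ∫ t in (0:ℝ)..1, ω (H (s', t)) (fderiv ℝ H (s', t) (0, 1)))
      (ω (H (s, 1)) (fderiv ℝ H (s, 1) (1, 0))
        - ω (H (s, 0)) (fderiv ℝ H (s, 0) (1, 0))) s :=
  stora_lemma_general E ω hω hclosed H hH s
end

section
/- (Stora's Corollary, vector-space formulation.) Let E be a real Banach space and ω : E → (E →L[ℝ] ℝ) a continuously differentiable closed 1-form (Dω(x) symmetric for every x). Let H : ℝ × ℝ → E be twice continuously differentiable with the initial endpoint fixed, H(s,0) = x₀ for all s, and set F(s) := ∫₀¹ ω(H(s,t))( ∂H/∂t (s,t) ) dt. Then F is differentiable and F′(s) = ω(H(s,1))( ∂H/∂s (s,1) ) for every s: the variation of the integrated anomaly along a deformation of the interpolating family that keeps the starting point fixed is the anomaly evaluated at the moving endpoint. -/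
open MeasureTheory Set

/-!
Pull `ω` back along `H` to the 1-form `θ = H^*ω` on the `(s, t)`-plane; it is closed because `ω`
is closed and `D²H` is symmetric. Differentiating under the integral sign and using closedness,
`F'(s) = ∫₀¹ ∂ₛ θ(∂ₜ) dt = ∫₀¹ ∂ₜ θ(∂ₛ) dt = θ(∂ₛ)(s, 1) - θ(∂ₛ)(s, 0)`, and the last term
vanishes because `H(·, 0)` is constant.
-/

section OneForms

variable {E F G : Type*} [NormedAddCommGroup E] [NormedSpace ℝ E] [NormedAddCommGroup F]
  [NormedSpace ℝ F] [NormedAddCommGroup G] [NormedSpace ℝ G]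

noncomputable def pullbackForm (ω : E → E →L[ℝ] G) (H : F → E) (p : F) : F →L[ℝ] G :=
  (ω (H p)).comp (fderiv ℝ H p)

def IsClosedForm (ω : E → E →L[ℝ] G) : Prop :=
  ∀ x v w, fderiv ℝ ω x v w = fderiv ℝ ω x w v

theorem ContDiff.pullbackForm {m n : WithTop ℕ∞} {ω : E → E →L[ℝ] G} {H : F → E}
    (hω : ContDiff ℝ n ω) (hH : ContDiff ℝ m H) (hnm : n + 1 ≤ m) :
    ContDiff ℝ n (pullbackForm ω H) :=
  (hω.comp (hH.of_le (le_self_add.trans hnm))).clm_comp (hH.fderiv_right hnm)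

theorem fderiv_pullbackForm_apply_apply {ω : E → E →L[ℝ] G} {H : F → E} {p : F}
    (hω : DifferentiableAt ℝ ω (H p)) (hH : ContDiffAt ℝ 2 H p) (v w : F) :
    fderiv ℝ (pullbackForm ω H) p v w =
      fderiv ℝ ω (H p) (fderiv ℝ H p v) (fderiv ℝ H p w) +
        ω (H p) (fderiv ℝ (fderiv ℝ H) p v w) := by
  have hH1 : DifferentiableAt ℝ H p := hH.differentiableAt two_ne_zero
  have hH2 : DifferentiableAt ℝ (fderiv ℝ H) p :=
    (hH.fderiv_right (m := 1) le_rfl).differentiableAt one_ne_zero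
  have hderiv : HasFDerivAt (pullbackForm ω H) _ p :=
    (hω.hasFDerivAt.comp p hH1.hasFDerivAt).clm_comp hH2.hasFDerivAt
  rw [hderiv.fderiv]
  simp [add_comm]

theorem IsClosedForm.pullbackForm {ω : E → E →L[ℝ] G} {H : F → E} (hω : Differentiable ℝ ω)
    (hclosed : IsClosedForm ω) (hH : ContDiff ℝ 2 H) : IsClosedForm (pullbackForm ω H) := by
  intro p v w
  rw [fderiv_pullbackForm_apply_apply (hω _) hH.contDiffAt,
    fderiv_pullbackForm_apply_apply (hω _) hH.contDiffAt, hclosed,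
    hH.contDiffAt.isSymmSndFDerivAt (by simp) v w]

section Slices

variable {f : ℝ × ℝ → G} {s t : ℝ}

theorem DifferentiableAt.hasDerivAt_slice_fst (hf : DifferentiableAt ℝ f (s, t)) :
    HasDerivAt (fun s' => f (s', t)) (fderiv ℝ f (s, t) (1, 0)) s :=
  hf.hasFDerivAt.comp_hasDerivAt s ((hasDerivAt_id s).prodMk (hasDerivAt_const s t))

theorem DifferentiableAt.hasDerivAt_slice_snd (hf : DifferentiableAt ℝ f (s, t)) :
    HasDerivAt (fun t' => f (s, t')) (fderiv ℝ f (s, t) (0, 1)) t :=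
  hf.hasFDerivAt.comp_hasDerivAt t ((hasDerivAt_const t s).prodMk (hasDerivAt_id t))

end Slices

theorem hasDerivAt_intervalIntegral_of_contDiff {f : ℝ × ℝ → G} (hf : ContDiff ℝ 1 f)
    (a b s : ℝ) :
    HasDerivAt (fun s' => ∫ t in a..b, f (s', t)) (∫ t in a..b, fderiv ℝ f (s, t) (1, 0)) s := by
  have hf' : Continuous fun p => fderiv ℝ f p (1, 0) :=
    (hf.continuous_fderiv one_ne_zero).clm_apply continuous_const
  obtain ⟨C, hC⟩ := ((isCompact_closedBall s 1).prod isCompact_uIcc).exists_bound_of_continuousOn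
    (f := fun p => fderiv ℝ f p (1, 0)) (s := Metric.closedBall s 1 ×ˢ uIcc a b) hf'.continuousOn
  refine (intervalIntegral.hasDerivAt_integral_of_dominated_loc_of_deriv_le
    (F := fun s' t => f (s', t)) (F' := fun s' t => fderiv ℝ f (s', t) (1, 0)) (bound := fun _ => C)
    (Metric.ball_mem_nhds s one_pos) ?_ ?_ ?_ ?_ (intervalIntegrable_const (μ := volume)) ?_).2
  · exact .of_forall fun s' =>
      (hf.continuous.comp (Continuous.prodMk_right s')).aestronglyMeasurable
  · exact (hf.continuous.comp (Continuous.prodMk_right s)).intervalIntegrable a b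
  · exact (hf'.comp (Continuous.prodMk_right s)).aestronglyMeasurable
  · exact ae_of_all _ fun t ht s' hs' =>
      hC (s', t) ⟨Metric.ball_subset_closedBall hs', uIoc_subset_uIcc ht⟩
  · exact ae_of_all _ fun t _ s' _ => (hf.differentiable one_ne_zero _).hasDerivAt_slice_fst

theorem hasDerivAt_intervalIntegral_of_isClosedForm [CompleteSpace G]
    {θ : ℝ × ℝ → ℝ × ℝ →L[ℝ] G} (hθ : ContDiff ℝ 1 θ) (hclosed : IsClosedForm θ) (a b s : ℝ) :
    HasDerivAt (fun s' => ∫ t in a..b, θ (s', t) (0, 1)) (θ (s, b) (1, 0) - θ (s, a) (1, 0)) s := by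
  have happ : ∀ v, ContDiff ℝ 1 fun p => θ p v := fun v => hθ.clm_apply contDiff_const
  have hfderiv : ∀ p v w, fderiv ℝ (fun q => θ q v) p w = fderiv ℝ θ p w v := fun p v w => by
    simp [fderiv_clm_apply (hθ.differentiable one_ne_zero p) (differentiableAt_const v)]
  convert hasDerivAt_intervalIntegral_of_contDiff (happ (0, 1)) a b s using 1
  have hswap : ∀ t, fderiv ℝ (fun q => θ q (0, 1)) (s, t) (1, 0) =
      fderiv ℝ (fun q => θ q (1, 0)) (s, t) (0, 1) := fun t => by
    rw [hfderiv, hfderiv, hclosed]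
  simp only [hswap]
  refine (intervalIntegral.integral_eq_sub_of_hasDerivAt (fun t _ =>
    ((happ (1, 0)).differentiable one_ne_zero _).hasDerivAt_slice_snd) ?_).symm
  exact ((((happ (1, 0)).continuous_fderiv one_ne_zero).clm_apply continuous_const).comp
    (Continuous.prodMk_right s)).intervalIntegrable a b

end OneForms

theorem stora_corollary_general
    (E : Type*) [NormedAddCommGroup E] [NormedSpace ℝ E]
    (ω : E → (E →L[ℝ] ℝ)) (hω : ContDiff ℝ 1 ω)
    (hclosed : ∀ x v w : E, (fderiv ℝ ω x v) w = (fderiv ℝ ω x w) v)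
    (H : ℝ × ℝ → E) (hH : ContDiff ℝ 2 H)
    (x₀ : E) (hfix : ∀ s : ℝ, H (s, 0) = x₀) (s : ℝ) :
    HasDerivAt
      (fun s' : ℝ =>
        ∫ t in (0:ℝ)..1, ω (H (s', t)) (fderiv ℝ H (s', t) (0, 1)))
      (ω (H (s, 1)) (fderiv ℝ H (s, 1) (1, 0))) s := by
  have hθ : ContDiff ℝ 1 (pullbackForm ω H) := hω.pullbackForm hH (by norm_num)
  have hθ_closed : IsClosedForm (pullbackForm ω H) :=
    IsClosedForm.pullbackForm (hω.differentiable one_ne_zero) hclosed hH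
  have hstart : fderiv ℝ H (s, 0) (1, 0) = 0 :=
    (hH.differentiable two_ne_zero _).hasDerivAt_slice_fst.unique
      (by simpa only [hfix] using hasDerivAt_const s x₀)
  simpa [pullbackForm, hstart] using hasDerivAt_intervalIntegral_of_isClosedForm hθ hθ_closed 0 1 s

/-- **Stora's Corollary** (vector-space formulation).  If the starting point
of the interpolating family is kept fixed, the variation of the integrated
anomaly is the anomaly evaluated at the moving endpoint. -/
theorem stora_corollary
    (E : Type*) [NormedAddCommGroup E] [NormedSpace ℝ E] [CompleteSpace E]
    (ω : E → (E →L[ℝ] ℝ)) (hω : ContDiff ℝ 1 ω)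
    (hclosed : ∀ x v w : E, (fderiv ℝ ω x v) w = (fderiv ℝ ω x w) v)
    (H : ℝ × ℝ → E) (hH : ContDiff ℝ 2 H)
    (x₀ : E) (hfix : ∀ s : ℝ, H (s, 0) = x₀) (s : ℝ) :
    HasDerivAt
      (fun s' : ℝ =>
        ∫ t in (0:ℝ)..1, ω (H (s', t)) (fderiv ℝ H (s', t) (0, 1)))
      (ω (H (s, 1)) (fderiv ℝ H (s, 1) (1, 0))) s :=
  stora_corollary_general E ω hω hclosed H hH x₀ hfix s
end
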